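/- arXiv:2601.16939 — 5 statements merged into one kernel-verified Lean document; each statement's English description precedes it below -/
import Mathlib

section
/- Let d ≥ 2, let f : ℝ^d → ℝ^d be smooth (C^∞) and 2πℤ^d-periodic, and let T > 0. Then there exist points x₁⁰, x₂⁰, y₁, y₂ ∈ ℝ^d with x₁⁰ − x₂⁰ ∉ 2πℤ^d and y₁ − y₂ ∉ 2πℤ^d such that for every bounded measurable control u : [0,T] → ℝ^d, every t ∈ [0,T], and all differentiable curves x₁, x₂ : [0,T] → ℝ^d satisfying xᵢ'(s) = f(xᵢ(s)) + u(s) for all s ∈ [0,T] and xᵢ(0) = xᵢ⁰ (i = 1,2), it is not the case that both x₁(t) − y₁ ∈ 2πℤ^d and x₂(t) − y₂ ∈ 2πℤ^d. -/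
open Set Real

/-- `v` belongs to the lattice `2πℤ^d`. -/
def inTwoPiLattice (d : ℕ) (v : Fin d → ℝ) : Prop :=
  ∃ k : Fin d → ℤ, v = fun i => 2 * Real.pi * (k i)

/-- fderiv of a periodic function is periodic. -/
lemma fderiv_periodic {d : ℕ} {f : (Fin d → ℝ) → (Fin d → ℝ)} (hf : ContDiff ℝ (⊤ : ℕ∞) f)
    (hper : ∀ (x : Fin d → ℝ) (k : Fin d → ℤ),
      f (x + fun i => 2 * Real.pi * (k i)) = f x)
    (x c : Fin d → ℝ) (k : Fin d → ℤ) (hc : c = fun i => 2 * Real.pi * (k i)) :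
    fderiv ℝ f (x + c) = fderiv ℝ f x := by
  have hdiff : Differentiable ℝ f := hf.differentiable (by simp)
  have h1 : HasFDerivAt (fun y => f (y + c)) (fderiv ℝ f (x + c)) x := by
    have := (hdiff (x + c)).hasFDerivAt.comp x ((hasFDerivAt_id x).add_const c)
    simpa using this
  have h2 : (fun y => f (y + c)) = f := by
    funext y; rw [hc]; exact hper y k
  rw [h2] at h1
  exact ((hdiff x).hasFDerivAt.unique h1).symm

/-- The affine system `ẋ = f(x) + u(t)` on the torus `𝕋^d = ℝ^d/2πℤ^d` is not
globally controllable in time `≤ T` in the space of 2-point ensembles. -/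
theorem stmt_1 (d : ℕ) (hd : 2 ≤ d)
    (f : (Fin d → ℝ) → (Fin d → ℝ)) (hf : ContDiff ℝ (⊤ : ℕ∞) f)
    (hper : ∀ (x : Fin d → ℝ) (k : Fin d → ℤ),
      f (x + fun i => 2 * Real.pi * (k i)) = f x)
    (T : ℝ) (hT : 0 < T) :
    ∃ x₁0 x₂0 y₁ y₂ : Fin d → ℝ,
      ¬ inTwoPiLattice d (x₁0 - x₂0) ∧
      ¬ inTwoPiLattice d (y₁ - y₂) ∧
      ∀ u : ℝ → (Fin d → ℝ), Measurable u →
        (∃ C : ℝ, ∀ s ∈ Set.Icc (0:ℝ) T, ‖u s‖ ≤ C) →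
        ∀ t ∈ Set.Icc (0:ℝ) T,
        ∀ x₁ x₂ : ℝ → (Fin d → ℝ),
          (∀ s ∈ Set.Icc (0:ℝ) T, HasDerivAt x₁ (f (x₁ s) + u s) s) →
          (∀ s ∈ Set.Icc (0:ℝ) T, HasDerivAt x₂ (f (x₂ s) + u s) s) →
          x₁ 0 = x₁0 → x₂ 0 = x₂0 →
          ¬ (inTwoPiLattice d (x₁ t - y₁) ∧ inTwoPiLattice d (x₂ t - y₂)) := by
  have hdiff : Differentiable ℝ f := hf.differentiable (by simp)
  -- the compact fundamental domain
  set S : Set (Fin d → ℝ) := Set.pi Set.univ (fun _ => Set.Icc (0:ℝ) (2 * Real.pi)) with hS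
  have hScomp : IsCompact S := isCompact_univ_pi (fun _ => isCompact_Icc)
  have hSne : S.Nonempty := ⟨0, fun i _ => ⟨le_refl _, by positivity⟩⟩
  have hcont : Continuous (fun x => ‖fderiv ℝ f x‖) :=
    (hf.continuous_fderiv (by simp)).norm
  obtain ⟨x₀, hx₀S, hx₀max⟩ := hScomp.exists_isMaxOn hSne hcont.continuousOn
  set M : ℝ := ‖fderiv ℝ f x₀‖ with hM
  have hM0 : 0 ≤ M := norm_nonneg _
  -- global bound on fderiv by periodicity
  have hbound : ∀ x : Fin d → ℝ, ‖fderiv ℝ f x‖ ≤ M := by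
    intro x
    set k : Fin d → ℤ := fun i => ⌊x i / (2 * Real.pi)⌋ with hk
    set r : Fin d → ℝ := x - (fun i => 2 * Real.pi * (k i)) with hr
    have hrS : r ∈ S := by
      intro i _
      have h2π : (0:ℝ) < 2 * Real.pi := by positivity
      have h1 : (k i : ℝ) ≤ x i / (2 * Real.pi) := Int.floor_le _
      have h2 : x i / (2 * Real.pi) < k i + 1 := Int.lt_floor_add_one _
      constructor
      · have := mul_le_mul_of_nonneg_left h1 h2π.le
        simp only [hr, Pi.sub_apply]
        rw [mul_div_cancel₀ _ (ne_of_gt h2π)] at this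
        linarith
      · have := mul_lt_mul_of_pos_left h2 h2π
        simp only [hr, Pi.sub_apply]
        rw [mul_div_cancel₀ _ (ne_of_gt h2π)] at this
        nlinarith
    have : x = r + (fun i => 2 * Real.pi * (k i)) := by
      funext i; simp [hr]
    rw [this, fderiv_periodic hf hper r _ k rfl]
    exact hx₀max hrS
  -- Lipschitz bound
  have hlip : ∀ a b : Fin d → ℝ, ‖f a - f b‖ ≤ M * ‖a - b‖ := by
    intro a b
    exact Convex.norm_image_sub_le_of_norm_fderiv_le
      (fun x _ => hdiff x) (fun x _ => hbound x) convex_univ (mem_univ b) (mem_univ a)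
  have hπ : 0 < Real.pi := Real.pi_pos
  have hexp : (1:ℝ) ≤ Real.exp (M * T) := by
    rw [← Real.exp_zero]; exact Real.exp_le_exp.mpr (by positivity)
  set ε : ℝ := Real.pi / (2 * Real.exp (M * T)) with hε
  have hε0 : 0 < ε := by positivity
  have hεπ : ε * Real.exp (M * T) = Real.pi / 2 := by
    field_simp [hε]
    rw [hε]; field_simp
  have hεsmall : ε ≤ Real.pi / 2 := by
    rw [← hεπ]
    nlinarith [Real.exp_pos (M * T)]
  set i0 : Fin d := ⟨0, by omega⟩ with hi0
  refine ⟨(fun i => if i = i0 then ε else 0), 0, (fun i => if i = i0 then Real.pi else 0), 0,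
    ?_, ?_, ?_⟩
  · rintro ⟨k, hk⟩
    have := congrFun hk i0
    simp only [Pi.sub_apply, Pi.zero_apply, if_pos rfl, if_true, sub_zero] at this
    rcases lt_trichotomy (k i0) 0 with h | h | h
    · have : (k i0 : ℝ) ≤ -1 := by exact_mod_cast (by omega : _ ≤ (-1:ℤ))
      nlinarith
    · rw [h] at this; simp at this; linarith
    · have : (1:ℝ) ≤ (k i0 : ℝ) := by exact_mod_cast h
      nlinarith
  · rintro ⟨k, hk⟩
    have := congrFun hk i0
    simp only [Pi.sub_apply, Pi.zero_apply, if_pos rfl, if_true, sub_zero] at this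
    rcases lt_trichotomy (k i0) 0 with h | h | h
    · have : (k i0 : ℝ) ≤ -1 := by exact_mod_cast (by omega : _ ≤ (-1:ℤ))
      nlinarith
    · rw [h] at this; simp at this
    · have : (1:ℝ) ≤ (k i0 : ℝ) := by exact_mod_cast h
      nlinarith
  · intro u _ _ t ht x₁ x₂ hx₁ hx₂ hx₁0 hx₂0 ⟨⟨k₁, hk₁⟩, ⟨k₂, hk₂⟩⟩
    set z : ℝ → (Fin d → ℝ) := fun s => x₁ s - x₂ s with hz
    -- Gronwall
    have hzd : ∀ s ∈ Set.Icc (0:ℝ) T, HasDerivAt z (f (x₁ s) - f (x₂ s)) s := by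
      intro s hs
      have := (hx₁ s hs).sub (hx₂ s hs)
      rw [show f (x₁ s) - f (x₂ s) = (f (x₁ s) + u s) - (f (x₂ s) + u s) by abel]; exact this
    have hzcont : ContinuousOn z (Set.Icc 0 T) :=
      fun s hs => ((hzd s hs).continuousAt).continuousWithinAt
    have hz0 : ‖z 0‖ ≤ ε := by
      have : z 0 = fun i => if i = i0 then ε else 0 := by
        simp [hz, hx₁0, hx₂0]
      rw [this]
      rw [pi_norm_le_iff_of_nonneg hε0.le]
      intro i
      by_cases h : i = i0 <;> simp [h, abs_of_nonneg hε0.le, hε0.le]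
    have hgron := norm_le_gronwallBound_of_norm_deriv_right_le (a := 0) (b := T)
      (f := z) (f' := fun s => f (x₁ s) - f (x₂ s)) (δ := ε) (K := M) (ε := 0)
      hzcont (fun s hs => (hzd s (Set.Ico_subset_Icc_self hs)).hasDerivWithinAt)
      hz0 (fun s hs => by simpa [hz] using hlip (x₁ s) (x₂ s))
    have hzt : ‖z t‖ ≤ ε * Real.exp (M * t) := by
      have := hgron t ht
      rwa [gronwallBound_ε0, sub_zero] at this
    have hzt' : ‖z t‖ < Real.pi := by
      have h1 : Real.exp (M * t) ≤ Real.exp (M * T) :=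
        Real.exp_le_exp.mpr (mul_le_mul_of_nonneg_left ht.2 hM0)
      have : ‖z t‖ ≤ Real.pi / 2 := by
        calc ‖z t‖ ≤ ε * Real.exp (M * t) := hzt
          _ ≤ ε * Real.exp (M * T) := by nlinarith
          _ = Real.pi / 2 := hεπ
      linarith
    -- But z t has first coordinate an odd multiple of π
    have hzi0 : z t i0 = Real.pi + 2 * Real.pi * ((k₁ i0 : ℝ) - (k₂ i0 : ℝ)) := by
      have h1 := congrFun hk₁ i0
      have h2 := congrFun hk₂ i0
      simp only [Pi.sub_apply, Pi.zero_apply, if_pos rfl, if_true, sub_zero] at h1 h2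
      simp only [hz, Pi.sub_apply]
      have hx1 : x₁ t i0 = Real.pi + 2 * Real.pi * (k₁ i0 : ℝ) := by linarith
      have hx2 : x₂ t i0 = 2 * Real.pi * (k₂ i0 : ℝ) := by linarith
      rw [hx1, hx2]; ring
    have habs : Real.pi ≤ |z t i0| := by
      rw [hzi0]
      set m : ℤ := k₁ i0 - k₂ i0 with hm
      have hcast : ((k₁ i0 : ℝ) - (k₂ i0 : ℝ)) = (m : ℝ) := by push_cast [hm]; ring
      rw [hcast]
      rcases le_or_gt 0 m with h | h
      · have : (0:ℝ) ≤ (m : ℝ) := by exact_mod_cast h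
        rw [abs_of_nonneg (by nlinarith)]
        nlinarith
      · have : (m : ℝ) ≤ -1 := by exact_mod_cast (by omega : _ ≤ (-1:ℤ))
        rw [abs_of_nonpos (by nlinarith)]
        nlinarith
    have : |z t i0| ≤ ‖z t‖ := by
      have := norm_le_pi_norm (z t) i0
      simpa using this
    linarith
end

section
/- Let M ⊆ ℤ² be a nonempty set. For m = (m₁,m₂), n = (n₁,n₂) ∈ ℤ² write m ∧ n = m₁n₂ − m₂n₁. Then the additive subgroup of ℤ² generated by M equals all of ℤ² if and only if the additive subgroup of ℤ generated by the set {m ∧ n : m, n ∈ M} equals all of ℤ (equivalently, if and only if the greatest common divisor of the numbers {m ∧ n : m, n ∈ M} equals 1). -/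
open Set

/-!
The wedge is bilinear, so the wedges of a spanning set span the wedges of all pairs, among them
`(1, 0) ∧ (0, 1) = 1`. Conversely, Cramer's rule `(m ∧ n) • c = (m ∧ c) • n - (n ∧ c) • m` puts
`r • c` in the span of `M` for every `r` in the span of the wedges, so `1` there gives every `c`.
-/

section Wedge

variable (R : Type*) [CommRing R]

def wedge : (R × R) →ₗ[R] (R × R) →ₗ[R] R :=
  LinearMap.mk₂ R (fun m n => m.1 * n.2 - m.2 * n.1)
    (fun _ _ _ => by simp only [Prod.fst_add, Prod.snd_add]; ring)
    (fun _ _ _ => by simp only [Prod.smul_fst, Prod.smul_snd, smul_eq_mul]; ring)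
    (fun _ _ _ => by simp only [Prod.fst_add, Prod.snd_add]; ring)
    (fun _ _ _ => by simp only [Prod.smul_fst, Prod.smul_snd, smul_eq_mul]; ring)

variable {R}

@[simp]
theorem wedge_apply (m n : R × R) : wedge R m n = m.1 * n.2 - m.2 * n.1 := rfl

theorem wedge_smul_eq_sub (m n c : R × R) :
    wedge R m n • c = wedge R m c • n - wedge R n c • m := by
  ext <;> simp <;> ring

theorem span_wedge_eq_top_of_span_eq_top {M : Set (R × R)} (h : Submodule.span R M = ⊤) :
    Submodule.span R (image2 (wedge R · ·) M M) = ⊤ := by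
  rw [← Submodule.map₂_span_span, h, Ideal.eq_top_iff_one]
  simpa using Submodule.apply_mem_map₂ (wedge R) (Submodule.mem_top (x := ((1 : R), (0 : R))))
    (Submodule.mem_top (x := ((0 : R), (1 : R))))

theorem span_eq_top_of_span_wedge_eq_top {M : Set (R × R)}
    (h : Submodule.span R (image2 (wedge R · ·) M M) = ⊤) : Submodule.span R M = ⊤ := by
  refine Submodule.eq_top_iff'.2 fun c => ?_
  have hle : Submodule.span R (image2 (wedge R · ·) M M) ≤
      (Submodule.span R M).comap (LinearMap.toSpanSingleton R _ c) := by
    rw [Submodule.span_le]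
    rintro _ ⟨m, hm, n, hn, rfl⟩
    rw [SetLike.mem_coe, Submodule.mem_comap, LinearMap.toSpanSingleton_apply, wedge_smul_eq_sub]
    exact sub_mem (Submodule.smul_mem _ _ (Submodule.subset_span hn))
      (Submodule.smul_mem _ _ (Submodule.subset_span hm))
  simpa using hle (h ▸ Submodule.mem_top : (1 : R) ∈ _)

theorem span_eq_top_iff_span_wedge_eq_top (M : Set (R × R)) :
    Submodule.span R M = ⊤ ↔ Submodule.span R (image2 (wedge R · ·) M M) = ⊤ :=
  ⟨span_wedge_eq_top_of_span_eq_top, span_eq_top_of_span_wedge_eq_top⟩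

end Wedge

theorem AddSubgroup.closure_eq_top_iff_span_int {G : Type*} [AddCommGroup G] (s : Set G) :
    AddSubgroup.closure s = ⊤ ↔ Submodule.span ℤ s = ⊤ := by
  rw [← Submodule.span_int_eq_addSubgroupClosure, Submodule.toAddSubgroup_eq_top]

theorem stmt_10_general (M : Set (ℤ × ℤ)) :
    AddSubgroup.closure M = ⊤ ↔
      AddSubgroup.closure
        {z : ℤ | ∃ m ∈ M, ∃ n ∈ M, z = m.1 * n.2 - m.2 * n.1} = ⊤ := by
  have hW : {z : ℤ | ∃ m ∈ M, ∃ n ∈ M, z = m.1 * n.2 - m.2 * n.1} =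
      image2 (wedge ℤ · ·) M M := by
    ext z; simp [eq_comm]
  rw [hW, AddSubgroup.closure_eq_top_iff_span_int, AddSubgroup.closure_eq_top_iff_span_int]
  exact span_eq_top_iff_span_wedge_eq_top M

/-- The subgroup of `ℤ²` generated by a nonempty set `M` is all of `ℤ²` if and only if
the subgroup of `ℤ` generated by the wedges `m ∧ n = m₁n₂ − m₂n₁`, `m, n ∈ M`, is all
of `ℤ` (i.e. the g.c.d. of these wedges is `1`). -/
theorem stmt_10 (M : Set (ℤ × ℤ)) (hM : M.Nonempty) :
    AddSubgroup.closure M = ⊤ ↔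
      AddSubgroup.closure
        {z : ℤ | ∃ m ∈ M, ∃ n ∈ M, z = m.1 * n.2 - m.2 * n.1} = ⊤ :=
  stmt_10_general M
end

section
/- Let d ≥ 1 and let S ⊆ ℤ^d be a finite set such that 0 ∉ S and such that m ∈ S implies −m ∉ S. Let a, b : S → ℝ^d be arbitrary, and define f : ℝ^d → ℝ^d by f(x) = Σ_{m ∈ S} (a_m·cos⟨m,x⟩ + b_m·sin⟨m,x⟩), where ⟨m,x⟩ = Σᵢ mᵢxᵢ. Then the real linear span of the set of values {f(x) : x ∈ ℝ^d} equals the real linear span of the set of coefficient vectors {a_m : m ∈ S} ∪ {b_m : m ∈ S}. -/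
/-!
Write `cos θ · c + sin θ · s = ((c - s i) e^{iθ} + (c + s i) e^{-iθ}) / 2`. The frequencies `±m`
with `m ∈ S` are pairwise distinct because `S ∩ (-S) = ∅`, so the characters `x ↦ e^{±i⟨m,x⟩}`
are linearly independent over `ℂ` (Dedekind). Hence a trigonometric polynomial that vanishes
identically has vanishing coefficients, first for scalar coefficients and then, by applying
linear functionals, for vector coefficients. Applied to `f` composed with the quotient map by
`span (range f)`, this puts every `a m`, `b m` into `span (range f)`; the other inclusion is clear.
-/

open Set

/-- The integer pairing `⟨m, x⟩ = Σᵢ mᵢ xᵢ` of a lattice vector with a point of `ℝ^d`. -/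
def latDot (d : ℕ) (m : Fin d → ℤ) (x : Fin d → ℝ) : ℝ := ∑ i, (m i : ℝ) * x i

lemma ofReal_cos_mul_add_sin_mul (θ c s : ℝ) :
    ((Real.cos θ * c + Real.sin θ * s : ℝ) : ℂ) =
      (c - s * Complex.I) / 2 * Complex.exp (θ * Complex.I) +
        (c + s * Complex.I) / 2 * Complex.exp (-θ * Complex.I) := by
  rw [Complex.exp_mul_I, Complex.exp_mul_I, Complex.cos_neg, Complex.sin_neg]
  push_cast
  linear_combination (Complex.sin θ * s) * Complex.I_sq

section TrigPolynomial

variable {V : Type*} [AddCommGroup V] [Module ℝ V]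

noncomputable def expChar (ℓ : V →ₗ[ℝ] ℝ) : Multiplicative V →* ℂ where
  toFun x := Complex.exp (ℓ x.toAdd * Complex.I)
  map_one' := by simp
  map_mul' x y := by simp [add_mul, Complex.exp_add]

lemma expChar_apply (ℓ : V →ₗ[ℝ] ℝ) (x : V) :
    expChar ℓ (.ofAdd x) = Complex.exp (ℓ x * Complex.I) := rfl

lemma expChar_injective : Function.Injective (expChar (V := V)) := by
  intro ℓ ℓ' h
  by_contra hne
  obtain ⟨x, hx⟩ : ∃ x, (ℓ - ℓ') x ≠ 0 := by
    by_contra! hx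
    exact hne (sub_eq_zero.mp (LinearMap.ext hx))
  -- at `y = (π / (ℓ - ℓ') x) • x` the two characters differ by the factor `exp (π i) = -1`
  set y := (Real.pi / (ℓ - ℓ') x) • x
  have hy : ℓ y = ℓ' y + Real.pi := by
    have : (ℓ - ℓ') y = Real.pi := by simp only [y, map_smul, smul_eq_mul]; field_simp
    simp only [LinearMap.sub_apply] at this
    linarith
  have := DFunLike.congr_fun h (.ofAdd y)
  rw [expChar_apply, expChar_apply, hy, Complex.ofReal_add, add_mul, Complex.exp_add,
    Complex.exp_pi_mul_I, mul_neg_one, neg_eq_iff_add_eq_zero, ← two_mul] at this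
  simp [Complex.exp_ne_zero] at this

lemma linearIndependent_expChar :
    LinearIndependent ℂ (fun ℓ : V →ₗ[ℝ] ℝ ↦ ⇑(expChar ℓ)) :=
  (linearIndependent_monoidHom (Multiplicative V) ℂ).comp _ expChar_injective

theorem cos_sin_coeffs_eq_zero_real {ι : Type*} {S : Finset ι} {ℓ : ι → V →ₗ[ℝ] ℝ}
    (hℓ : Function.Injective ℓ) (hsym : ∀ m ∈ S, ∀ n ∈ S, ℓ m ≠ -ℓ n) {c s : ι → ℝ}
    (h : ∀ x, ∑ m ∈ S, (Real.cos (ℓ m x) * c m + Real.sin (ℓ m x) * s m) = 0)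
    {m : ι} (hm : m ∈ S) : c m = 0 ∧ s m = 0 := by
  set freq : S ⊕ S → V →ₗ[ℝ] ℝ := Sum.elim (fun n ↦ ℓ n) (fun n ↦ -ℓ n)
  have hfreq : Function.Injective freq :=
    (hℓ.comp Subtype.val_injective).sumElim (neg_injective.comp (hℓ.comp Subtype.val_injective))
      fun n n' ↦ hsym n n.2 n' n'.2
  set g : S ⊕ S → ℂ :=
    Sum.elim (fun n ↦ (c n - s n * Complex.I) / 2) (fun n ↦ (c n + s n * Complex.I) / 2)
  have hg : ∑ i, g i • ⇑(expChar (freq i)) = 0 := by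
    funext x
    obtain ⟨y, rfl⟩ := Multiplicative.ofAdd.surjective x
    simp only [Fintype.sum_sum_type, Finset.sum_apply, Pi.smul_apply, expChar_apply, g, freq,
      Sum.elim_inl, Sum.elim_inr, LinearMap.neg_apply, Complex.ofReal_neg, smul_eq_mul,
      ← Finset.sum_add_distrib, ← ofReal_cos_mul_add_sin_mul, ← Complex.ofReal_sum,
      Pi.zero_apply]
    rw [Finset.sum_coe_sort S (fun n ↦ Real.cos (ℓ n y) * c n + Real.sin (ℓ n y) * s n), h y,
      Complex.ofReal_zero]
  have hgm := Fintype.linearIndependent_iff.mp (linearIndependent_expChar.comp freq hfreq) g hg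
    (.inl ⟨m, hm⟩)
  simpa [g, Complex.ext_iff] using hgm

theorem cos_sin_coeffs_eq_zero {E ι : Type*} [AddCommGroup E] [Module ℝ E] {S : Finset ι} {ℓ : ι → V →ₗ[ℝ] ℝ}
    (hℓ : Function.Injective ℓ) (hsym : ∀ m ∈ S, ∀ n ∈ S, ℓ m ≠ -ℓ n) {a b : ι → E}
    (h : ∀ x, ∑ m ∈ S, (Real.cos (ℓ m x) • a m + Real.sin (ℓ m x) • b m) = 0)
    {m : ι} (hm : m ∈ S) : a m = 0 ∧ b m = 0 := by
  have hdual (φ : Module.Dual ℝ E) : φ (a m) = 0 ∧ φ (b m) = 0 :=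
    cos_sin_coeffs_eq_zero_real hℓ hsym (c := φ ∘ a) (s := φ ∘ b)
      (fun x ↦ by simpa using congrArg φ (h x)) hm
  exact ⟨(Module.forall_dual_apply_eq_zero_iff ℝ _).mp fun φ ↦ (hdual φ).1,
    (Module.forall_dual_apply_eq_zero_iff ℝ _).mp fun φ ↦ (hdual φ).2⟩

end TrigPolynomial

noncomputable def latDotLinear (d : ℕ) (m : Fin d → ℤ) : (Fin d → ℝ) →ₗ[ℝ] ℝ :=
  ∑ i, (m i : ℝ) • LinearMap.proj i

@[simp]
lemma latDotLinear_apply (d : ℕ) (m : Fin d → ℤ) (x : Fin d → ℝ) :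
    latDotLinear d m x = latDot d m x := by
  simp [latDotLinear, latDot]

lemma latDotLinear_neg (d : ℕ) (m : Fin d → ℤ) : latDotLinear d (-m) = -latDotLinear d m := by
  ext x
  simp [latDot]

lemma latDotLinear_injective (d : ℕ) : Function.Injective (latDotLinear d) := by
  intro m n h
  funext j
  have := LinearMap.congr_fun h (Pi.single j 1)
  simpa [latDot, Pi.single_apply] using this

theorem stmt_12_general (d : ℕ) (S : Finset (Fin d → ℤ))
    (hsym : ∀ m ∈ S, -m ∉ S)
    (a b : (Fin d → ℤ) → (Fin d → ℝ)) :
    Submodule.span ℝ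
        (Set.range (fun x : Fin d → ℝ =>
          ∑ m ∈ S, (Real.cos (latDot d m x) • a m + Real.sin (latDot d m x) • b m))) =
      Submodule.span ℝ (a '' S ∪ b '' S) := by
  set f := fun x : Fin d → ℝ ↦
    ∑ m ∈ S, (Real.cos (latDot d m x) • a m + Real.sin (latDot d m x) • b m)
  set V := Submodule.span ℝ (Set.range f)
  refine le_antisymm (Submodule.span_le.mpr ?_) (Submodule.span_le.mpr ?_)
  · rintro _ ⟨x, rfl⟩
    exact Submodule.sum_mem _ fun m hm ↦ add_mem
      (Submodule.smul_mem _ _ (Submodule.subset_span (Or.inl ⟨m, hm, rfl⟩)))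
      (Submodule.smul_mem _ _ (Submodule.subset_span (Or.inr ⟨m, hm, rfl⟩)))
  · have hfreq : ∀ m ∈ S, ∀ n ∈ S, latDotLinear d m ≠ -latDotLinear d n := by
      intro m hm n hn hmn
      rw [← latDotLinear_neg] at hmn
      exact hsym n hn (latDotLinear_injective d hmn ▸ hm)
    have hquot (m) (hm : m ∈ S) : V.mkQ (a m) = 0 ∧ V.mkQ (b m) = 0 :=
      cos_sin_coeffs_eq_zero (latDotLinear_injective d) hfreq
        (a := V.mkQ ∘ a) (b := V.mkQ ∘ b) (fun x ↦ by
          have hx : V.mkQ (f x) = 0 :=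
            (Submodule.Quotient.mk_eq_zero V).mpr (Submodule.subset_span (mem_range_self x))
          simpa only [f, map_sum, map_add, map_smul, Function.comp_apply, latDotLinear_apply]
            using hx) hm
    rintro _ (⟨m, hm, rfl⟩ | ⟨m, hm, rfl⟩)
    exacts [(Submodule.Quotient.mk_eq_zero V).mp (hquot m hm).1,
      (Submodule.Quotient.mk_eq_zero V).mp (hquot m hm).2]

/-- The pointwise span of the values of a trigonometric vector polynomial equals
the span of its Fourier coefficient vectors. -/
theorem stmt_12 (d : ℕ) (hd : 1 ≤ d) (S : Finset (Fin d → ℤ))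
    (h0 : (0 : Fin d → ℤ) ∉ S) (hsym : ∀ m ∈ S, -m ∉ S)
    (a b : (Fin d → ℤ) → (Fin d → ℝ)) :
    Submodule.span ℝ
        (Set.range (fun x : Fin d → ℝ =>
          ∑ m ∈ S, (Real.cos (latDot d m x) • a m + Real.sin (latDot d m x) • b m))) =
      Submodule.span ℝ (a '' S ∪ b '' S) :=
  stmt_12_general d S hsym a b
end

section
/- Let S ⊆ ℤ² be a finite set such that 0 ∉ S, m ∈ S implies −m ∉ S, and the real linear span of S equals ℝ². Let a, b : S → ℝ² satisfy, for every m ∈ S, ⟨m, a_m⟩ = ⟨m, b_m⟩ = 0 and (a_m, b_m) ≠ (0, 0). Define f : ℝ² → ℝ² by f(x) = Σ_{m ∈ S} (a_m·cos⟨m,x⟩ + b_m·sin⟨m,x⟩). Then the real linear span of {f(x) : x ∈ ℝ²} equals ℝ². -/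
open Set

/-- The integer pairing `⟨m, x⟩ = Σᵢ mᵢ xᵢ` of a lattice vector with a point of `ℝ²`. -/
def latDot2 (m : Fin 2 → ℤ) (x : Fin 2 → ℝ) : ℝ := ∑ i, (m i : ℝ) * x i

/-!
If the values of `f` lay in a proper subspace, some `u ≠ 0` would be orthogonal to all of them,
so `Σₘ (cos⟨m,x⟩ ⟨u,aₘ⟩ + sin⟨m,x⟩ ⟨u,bₘ⟩) = 0` for all `x`. Writing `cos` and `sin` through
`exp(±i⟨m,x⟩)`, the characters involved are pairwise distinct because `S ∩ -S = ∅`, so Artin's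
linear independence of characters forces `⟨u,aₘ⟩ = ⟨u,bₘ⟩ = 0`. Since the modes span `ℝ²`, some
`m ∈ S` is not parallel to `u`; then `aₘ` and `bₘ` are orthogonal to the two independent vectors
`m` and `u`, hence vanish.
-/

section

variable {V : Type*} [AddCommGroup V] [Module ℝ V]

noncomputable def expCharacter (ℓ : Module.Dual ℝ V) : Multiplicative V →* ℂ where
  toFun x := Complex.exp (ℓ x.toAdd * Complex.I)
  map_one' := by simp
  map_mul' x y := by simp [add_mul, Complex.exp_add]

lemma expCharacter_apply (ℓ : Module.Dual ℝ V) (x : Multiplicative V) :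
    expCharacter ℓ x = Real.cos (ℓ x.toAdd) + Real.sin (ℓ x.toAdd) * Complex.I := by
  simp [expCharacter, Complex.exp_mul_I]

lemma expCharacter_injective : Function.Injective (expCharacter (V := V)) := by
  intro ℓ ℓ' h
  by_contra hne
  obtain ⟨x, hx⟩ : ∃ x, ℓ x ≠ ℓ' x := by
    contrapose! hne
    exact LinearMap.ext hne
  -- at the point where `ℓ - ℓ'` equals `π` the two characters differ by the factor `exp (π i) = -1`
  have hy : ℓ ((Real.pi / (ℓ x - ℓ' x)) • x) = ℓ' ((Real.pi / (ℓ x - ℓ' x)) • x) + Real.pi := by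
    have : ℓ x - ℓ' x ≠ 0 := sub_ne_zero.mpr hx
    simp only [map_smul, smul_eq_mul]
    field_simp
    ring
  have := DFunLike.congr_fun h (.ofAdd ((Real.pi / (ℓ x - ℓ' x)) • x))
  simp only [expCharacter, MonoidHom.coe_mk, OneHom.coe_mk, toAdd_ofAdd, hy, Complex.ofReal_add,
    add_mul, Complex.exp_add, Complex.exp_pi_mul_I] at this
  exact Complex.exp_ne_zero _ (by linear_combination -this / 2)

theorem eq_zero_of_forall_sum_cos_mul_add_sin_mul_eq_zero {ι : Type*} (S : Finset ι)
    (ℓ : ι → Module.Dual ℝ V) (hinj : Set.InjOn ℓ S) (hneg : ∀ m ∈ S, ∀ m' ∈ S, ℓ m ≠ -ℓ m')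
    (c d : ι → ℝ) (h : ∀ x, ∑ m ∈ S, (Real.cos (ℓ m x) * c m + Real.sin (ℓ m x) * d m) = 0) :
    ∀ m ∈ S, c m = 0 ∧ d m = 0 := by
  have hfreq : Function.Injective (Sum.elim (fun m : S ↦ ℓ m) (fun m : S ↦ -ℓ m)) :=
    hinj.injective.sumElim (neg_injective.comp hinj.injective) fun m m' ↦ hneg m m.2 m' m'.2
  have hindep := (linearIndependent_monoidHom (Multiplicative V) ℂ).comp _
    (expCharacter_injective.comp hfreq)
  let g : S ⊕ S → ℂ :=
    Sum.elim (fun m ↦ (c m - d m * Complex.I) / 2) (fun m ↦ (c m + d m * Complex.I) / 2)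
  have hg : ∑ i, g i • ((fun f : Multiplicative V →* ℂ ↦ ⇑f) ∘ expCharacter ∘
      Sum.elim (fun m : S ↦ ℓ m) (fun m : S ↦ -ℓ m)) i = 0 := by
    ext x
    have hpair : ∀ m : S, g (.inl m) * expCharacter (ℓ m) x + g (.inr m) * expCharacter (-ℓ m) x =
        ((Real.cos (ℓ m x.toAdd) * c m + Real.sin (ℓ m x.toAdd) * d m : ℝ) : ℂ) := by
      intro m
      rw [expCharacter_apply, expCharacter_apply]
      simp only [g, Sum.elim_inl, Sum.elim_inr, LinearMap.neg_apply, Real.cos_neg, Real.sin_neg,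
        Complex.ofReal_add, Complex.ofReal_mul, Complex.ofReal_neg]
      linear_combination -(d m * Real.sin (ℓ m x.toAdd) : ℂ) * Complex.I_sq
    simp only [Fintype.sum_sum_type, Finset.sum_apply, Pi.smul_apply, Function.comp_apply,
      Sum.elim_inl, Sum.elim_inr, smul_eq_mul, Pi.zero_apply, ← Finset.sum_add_distrib, hpair]
    exact_mod_cast (Finset.sum_coe_sort S _).trans (h x.toAdd)
  intro m hm
  have hgm := Fintype.linearIndependent_iff.mp hindep g hg (.inl ⟨m, hm⟩)
  simpa [g, Complex.ext_iff] using hgm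

end

theorem exists_ne_zero_forall_dotProduct_eq_zero_of_span_ne_top {K n : Type*} [Field K]
    [Fintype n] [DecidableEq n] {s : Set (n → K)} (hs : Submodule.span K s ≠ ⊤) :
    ∃ u ≠ 0, ∀ x ∈ s, u ⬝ᵥ x = 0 := by
  obtain ⟨φ, hφ, hφs⟩ := Submodule.exists_dual_map_eq_bot_of_lt_top hs.lt_top inferInstance
  obtain ⟨u, rfl⟩ := (dotProductEquiv K n).surjective φ
  refine ⟨u, by simpa using hφ, fun x hx ↦ ?_⟩
  have : u ⬝ᵥ x ∈ (Submodule.span K s).map (dotProductEquiv K n u) :=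
    ⟨x, Submodule.subset_span hx, rfl⟩
  simpa [hφs] using this

theorem exists_mem_linearIndependent_pair {K V : Type*} [DivisionRing K] [AddCommGroup V]
    [Module K V] (hV : 1 < Module.finrank K V) {s : Set V} (hs : Submodule.span K s = ⊤)
    {u : V} (hu : u ≠ 0) : ∃ v ∈ s, LinearIndependent K ![v, u] := by
  by_contra! hdep
  have hsu : Submodule.span K s ≤ K ∙ u := Submodule.span_le.mpr fun v hv ↦ by
    obtain ⟨a, rfl⟩ : ∃ a : K, a • u = v := by simpa [linearIndependent_fin2, hu] using hdep v hv
    exact Submodule.smul_mem _ a (Submodule.mem_span_singleton_self u)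
  rw [hs, top_le_iff] at hsu
  have := finrank_span_singleton (K := K) hu
  rw [hsu, finrank_top] at this
  omega

theorem eq_zero_of_linearIndependent_of_forall_dotProduct_eq_zero {K n : Type*} [Field K]
    [Fintype n] [DecidableEq n] {v : n → n → K} (hv : LinearIndependent K v) {x : n → K}
    (hx : ∀ i, v i ⬝ᵥ x = 0) : x = 0 := by
  have hM : IsUnit (Matrix.of v) := Matrix.linearIndependent_rows_iff_isUnit.mp hv
  refine Matrix.mulVec_injective_iff_isUnit.mpr hM ?_
  ext i
  simpa [Matrix.mulVec] using hx i

theorem stmt_13_general (S : Finset (Fin 2 → ℤ))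
    (hsym : ∀ m ∈ S, -m ∉ S)
    (hspan : Submodule.span ℝ ((fun m : Fin 2 → ℤ => fun i => (m i : ℝ)) '' S) = ⊤)
    (a b : (Fin 2 → ℤ) → (Fin 2 → ℝ))
    (horth : ∀ m ∈ S, (∑ i, (m i : ℝ) * a m i) = 0 ∧ (∑ i, (m i : ℝ) * b m i) = 0)
    (hne : ∀ m ∈ S, ¬ (a m = 0 ∧ b m = 0)) :
    Submodule.span ℝ
        (Set.range (fun x : Fin 2 → ℝ =>
          ∑ m ∈ S, (Real.cos (latDot2 m x) • a m + Real.sin (latDot2 m x) • b m))) = ⊤ := by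
  by_contra htop
  obtain ⟨u, hu, hperp⟩ := exists_ne_zero_forall_dotProduct_eq_zero_of_span_ne_top htop
  let ℓ : (Fin 2 → ℤ) → Module.Dual ℝ (Fin 2 → ℝ) := fun m ↦
    dotProductEquiv ℝ (Fin 2) (Int.cast ∘ m)
  have hℓ : Function.Injective ℓ :=
    (dotProductEquiv ℝ _).injective.comp (Int.cast_injective.comp_left)
  have hℓneg (m : Fin 2 → ℤ) : ℓ (-m) = -ℓ m := by
    ext x
    simp [ℓ, dotProduct]
  have hℓ_apply (m : Fin 2 → ℤ) (x : Fin 2 → ℝ) : ℓ m x = latDot2 m x := rfl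
  have hkill : ∀ m ∈ S, u ⬝ᵥ a m = 0 ∧ u ⬝ᵥ b m = 0 := by
    refine eq_zero_of_forall_sum_cos_mul_add_sin_mul_eq_zero S ℓ hℓ.injOn
      (fun m hm m' hm' h ↦ hsym m' hm' (hℓ (h.trans (hℓneg m').symm) ▸ hm)) _ _ fun x ↦ ?_
    simpa [hℓ_apply, dotProduct_sum, dotProduct_add, dotProduct_smul] using
      hperp _ (Set.mem_range_self x)
  obtain ⟨_, ⟨m, hm, rfl⟩, hindep⟩ := exists_mem_linearIndependent_pair (by simp) hspan hu
  have hperp_mode {w : Fin 2 → ℝ} (hmw : ∑ i, (m i : ℝ) * w i = 0) (huw : u ⬝ᵥ w = 0) : w = 0 :=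
    eq_zero_of_linearIndependent_of_forall_dotProduct_eq_zero hindep
      (Fin.forall_fin_two.mpr ⟨hmw, huw⟩)
  exact hne m hm
    ⟨hperp_mode (horth m hm).1 (hkill m hm).1, hperp_mode (horth m hm).2 (hkill m hm).2⟩

/-- For a divergence-free trigonometric vector field on `𝕋²` whose modes span `ℝ²`,
the values span `ℝ²`. -/
theorem stmt_13 (S : Finset (Fin 2 → ℤ))
    (h0 : (0 : Fin 2 → ℤ) ∉ S) (hsym : ∀ m ∈ S, -m ∉ S)
    (hspan : Submodule.span ℝ ((fun m : Fin 2 → ℤ => fun i => (m i : ℝ)) '' S) = ⊤)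
    (a b : (Fin 2 → ℤ) → (Fin 2 → ℝ))
    (horth : ∀ m ∈ S, (∑ i, (m i : ℝ) * a m i) = 0 ∧ (∑ i, (m i : ℝ) * b m i) = 0)
    (hne : ∀ m ∈ S, ¬ (a m = 0 ∧ b m = 0)) :
    Submodule.span ℝ
        (Set.range (fun x : Fin 2 → ℝ =>
          ∑ m ∈ S, (Real.cos (latDot2 m x) • a m + Real.sin (latDot2 m x) • b m))) = ⊤ :=
  stmt_13_general S hsym hspan a b horth hne
end

section
/- Let m, n ∈ ℝ³ and a_m, b_m, c_n, d_n ∈ ℝ³, write ⟨·,·⟩ for the standard inner product, and define the Lie bracket of C¹ vector fields on ℝ³ by [V,W](x) = DV(x)(W(x)) − DW(x)(V(x)). Then for all x ∈ ℝ³: [a_m·cos⟨m,·⟩ + b_m·sin⟨m,·⟩, c_n·cos⟨n,·⟩ + d_n·sin⟨n,·⟩](x) − [−a_m·sin⟨m,·⟩ + b_m·cos⟨m,·⟩, −c_n·sin⟨n,·⟩ + d_n·cos⟨n,·⟩](x) = (⟨m,c_n⟩·b_m + ⟨m,d_n⟩·a_m − ⟨n,b_m⟩·c_n − ⟨n,a_m⟩·d_n)·cos⟨m+n,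 x⟩ + (⟨m,d_n⟩·b_m − ⟨m,c_n⟩·a_m − ⟨n,b_m⟩·d_n + ⟨n,a_m⟩·c_n)·sin⟨m+n, x⟩. -/
open Set Real

/-- The standard inner product on `ℝ³`. -/
def dot3 (m x : Fin 3 → ℝ) : ℝ := ∑ i, m i * x i

/-- The Lie bracket of vector fields on `ℝ³`: `[V,W](x) = DV(x)(W(x)) − DW(x)(V(x))`. -/
noncomputable def lieVF3 (V W : (Fin 3 → ℝ) → (Fin 3 → ℝ)) (x : Fin 3 → ℝ) : Fin 3 → ℝ :=
  fderiv ℝ V x (W x) - fderiv ℝ W x (V x)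

/-!
Every field in the statement is a plane wave `y ↦ Φ ⟨m, y⟩`, whose derivative in direction `w`
is `⟨m, w⟩ • Φ' ⟨m, y⟩`, so the bracket of two plane waves is explicit. The profiles
`cos s • a + sin s • b` and `-(sin s • a) + cos s • b` are each other's derivative up to sign,
and after that substitution the addition formulas for `cos` and `sin` give the frequency `m + n`.
-/

theorem dot3_eq_dotProduct (m x : Fin 3 → ℝ) : dot3 m x = m ⬝ᵥ x := rfl

theorem hasFDerivAt_dot3 (m x : Fin 3 → ℝ) :
    HasFDerivAt (dot3 m) (LinearMap.toContinuousLinearMap (dotProductBilin ℝ ℝ m)) x :=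
  (LinearMap.toContinuousLinearMap (dotProductBilin ℝ ℝ m)).hasFDerivAt

section PlaneWave

variable {E : Type*} [NormedAddCommGroup E] [NormedSpace ℝ E]

theorem fderiv_comp_dot3_apply {Φ : ℝ → E} {Φ' : E} {m x : Fin 3 → ℝ}
    (hΦ : HasDerivAt Φ Φ' (dot3 m x)) (w : Fin 3 → ℝ) :
    fderiv ℝ (fun y => Φ (dot3 m y)) x w = dot3 m w • Φ' := by
  have h : HasFDerivAt (fun y => Φ (dot3 m y)) _ x := hΦ.hasFDerivAt.comp x (hasFDerivAt_dot3 m x)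
  rw [h.fderiv]
  rfl

variable (a b : E) (s : ℝ)

theorem hasDerivAt_cos_smul_add_sin_smul :
    HasDerivAt (fun t => cos t • a + sin t • b) (-(sin s • a) + cos s • b) s := by
  have h := ((hasDerivAt_cos s).smul_const a).add ((hasDerivAt_sin s).smul_const b)
  rwa [neg_smul] at h

theorem hasDerivAt_neg_sin_smul_add_cos_smul :
    HasDerivAt (fun t => -(sin t • a) + cos t • b) (-(cos s • a + sin s • b)) s := by
  have h := ((hasDerivAt_sin s).smul_const a).neg.add ((hasDerivAt_cos s).smul_const b)
  rwa [neg_smul, ← neg_add] at h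

end PlaneWave

theorem lieVF3_comp_dot3 {Φ Ψ : ℝ → Fin 3 → ℝ} {Φ' Ψ' : Fin 3 → ℝ} {m n x : Fin 3 → ℝ}
    (hΦ : HasDerivAt Φ Φ' (dot3 m x)) (hΨ : HasDerivAt Ψ Ψ' (dot3 n x)) :
    lieVF3 (fun y => Φ (dot3 m y)) (fun y => Ψ (dot3 n y)) x
      = dot3 m (Ψ (dot3 n x)) • Φ' - dot3 n (Φ (dot3 m x)) • Ψ' := by
  rw [lieVF3, fderiv_comp_dot3_apply hΦ, fderiv_comp_dot3_apply hΨ]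

/-- The combined bracket formula on `𝕋³`, producing the frequency `m + n` from general
trigonometric vector fields with frequencies `m` and `n`. -/
theorem stmt_16 (m n am bm cn dn : Fin 3 → ℝ) :
    ∀ x : Fin 3 → ℝ,
      lieVF3 (fun y => Real.cos (dot3 m y) • am + Real.sin (dot3 m y) • bm)
             (fun y => Real.cos (dot3 n y) • cn + Real.sin (dot3 n y) • dn) x
        - lieVF3 (fun y => -(Real.sin (dot3 m y) • am) + Real.cos (dot3 m y) • bm)
                 (fun y => -(Real.sin (dot3 n y) • cn) + Real.cos (dot3 n y) • dn) x
        = Real.cos (dot3 (m + n) x) •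
            (dot3 m cn • bm + dot3 m dn • am - dot3 n bm • cn - dot3 n am • dn)
          + Real.sin (dot3 (m + n) x) •
            (dot3 m dn • bm - dot3 m cn • am - dot3 n bm • dn + dot3 n am • cn) := by
  intro x
  rw [lieVF3_comp_dot3 (hasDerivAt_cos_smul_add_sin_smul am bm _)
      (hasDerivAt_cos_smul_add_sin_smul cn dn _),
    lieVF3_comp_dot3 (hasDerivAt_neg_sin_smul_add_cos_smul am bm _)
      (hasDerivAt_neg_sin_smul_add_cos_smul cn dn _)]
  simp only [dot3_eq_dotProduct, add_dotProduct, dotProduct_add, dotProduct_smul,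
    dotProduct_neg, smul_eq_mul, cos_add, sin_add]
  module
end
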